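/- Let f* and g* attain the ordered modulus ω(δ₀; F, G) with δ₀ = ‖K(g*−f*)‖ > 0, and suppose there is ι ∈ V with Lι = 1 such that f* + cι ∈ F for all c in a neighborhood of 0. Then ω(·; F, G) is differentiable at δ₀ with derivative ω'(δ₀) = δ₀ / ⟨Kι, K(g* − f*)⟩. -/

import Mathlib

def orderedModulusSet {V Y : Type*} [AddCommGroup V] [Module ℝ V]
    [NormedAddCommGroup Y] [InnerProductSpace ℝ Y]
    (K : V →ₗ[ℝ] Y) (L : V →ₗ[ℝ] ℝ) (F G : Set V) (δ : ℝ) : Set ℝ :=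
  {r | ∃ f ∈ F, ∃ g ∈ G, ‖K (g - f)‖ ≤ δ ∧ r = L g - L f}

noncomputable def orderedModulus {V Y : Type*} [AddCommGroup V] [Module ℝ V]
    [NormedAddCommGroup Y] [InnerProductSpace ℝ Y]
    (K : V →ₗ[ℝ] Y) (L : V →ₗ[ℝ] ℝ) (F G : Set V) (δ : ℝ) : ℝ :=
  sSup (orderedModulusSet K L F G δ)

/-!
Write `u = K (g* - f*)` and `v = K ι`. Moving `f*` to `f* - t ι ∈ F` raises `L g - L f` by `t` and
changes the distance to `‖u + t v‖`, so `ω(δ₀) + t ≤ ω(‖u + t v‖)` for small `|t|`. Combined with a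
supergradient `d` this gives `t ≤ d (‖u + t v‖ - δ₀)`: the right side minus `t` has a local minimum
at `t = 0`, so its derivative `d ⟨u, v⟩ / δ₀ - 1` vanishes.
-/

open Filter Topology RealInnerProductSpace

theorem hasDerivAt_norm_add_smul {E : Type*} [NormedAddCommGroup E] [InnerProductSpace ℝ E]
    {u : E} (hu : u ≠ 0) (v : E) :
    HasDerivAt (fun t : ℝ => ‖u + t • v‖) (⟪u, v⟫ / ‖u‖) 0 := by
  have hline : HasDerivAt (fun t : ℝ => u + t • v) v 0 := by
    simpa using ((hasDerivAt_id (0 : ℝ)).smul_const v).const_add u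
  convert hline.norm_sq.sqrt (by simpa using hu) using 1
  · ext t; simp [Real.sqrt_sq (norm_nonneg _)]
  · simp [Real.sqrt_sq (norm_nonneg _)]; ring

theorem mul_eq_one_of_hasDerivAt_of_eventually_le {φ : ℝ → ℝ} {φ' d : ℝ}
    (hφ : HasDerivAt φ φ' 0) (h : ∀ᶠ t in 𝓝 0, t ≤ d * (φ t - φ 0)) : d * φ' = 1 := by
  have hmin : IsLocalMin (fun t => d * (φ t - φ 0) - t) 0 := by
    filter_upwards [h] with t ht
    simpa using ht
  have hderiv : HasDerivAt (fun t => d * (φ t - φ 0) - t) (d * φ' - 1) 0 :=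
    ((hφ.sub_const (φ 0)).const_mul d).sub (hasDerivAt_id' 0)
  linarith [hmin.hasDerivAt_eq_zero hderiv]

section OrderedModulus

variable {V Y : Type*} [AddCommGroup V] [Module ℝ V] [NormedAddCommGroup Y] [InnerProductSpace ℝ Y]
  {K : V →ₗ[ℝ] Y} {L : V →ₗ[ℝ] ℝ} {F G : Set V}

theorem sub_le_orderedModulus {δ : ℝ} (hB : BddAbove (orderedModulusSet K L F G δ))
    {f g : V} (hf : f ∈ F) (hg : g ∈ G) (hδ : ‖K (g - f)‖ ≤ δ) :
    L g - L f ≤ orderedModulus K L F G δ :=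
  le_csSup hB ⟨f, hf, g, hg, hδ, rfl⟩

theorem add_le_orderedModulus_norm_add_smul {f g ι : V} {t : ℝ}
    (hB : BddAbove (orderedModulusSet K L F G ‖K (g - f) + t • K ι‖))
    (hf : f - t • ι ∈ F) (hg : g ∈ G) (hι : L ι = 1) :
    L g - L f + t ≤ orderedModulus K L F G ‖K (g - f) + t • K ι‖ := by
  have hdist : K (g - (f - t • ι)) = K (g - f) + t • K ι := by
    rw [sub_sub_eq_add_sub, add_sub_right_comm, map_add, map_smul]
  have := sub_le_orderedModulus hB hf hg (by rw [hdist])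
  simpa [hι, sub_add] using this

end OrderedModulus

theorem translation_invariant_derivative_general {V Y : Type*} [AddCommGroup V] [Module ℝ V]
    [NormedAddCommGroup Y] [InnerProductSpace ℝ Y]
    (K : V →ₗ[ℝ] Y) (L : V →ₗ[ℝ] ℝ) (F G : Set V)
    (hbdd : ∀ δ > 0, BddAbove (orderedModulusSet K L F G δ))
    (δ₀ : ℝ) (hδ₀ : 0 < δ₀) (fStar gStar : V)
    (hgG : gStar ∈ G)
    (hnorm : ‖K (gStar - fStar)‖ = δ₀)
    (hattain : L gStar - L fStar = orderedModulus K L F G δ₀)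
    (ι : V) (hι : L ι = 1)
    (htrans : ∃ η > 0, ∀ c : ℝ, |c| ≤ η → fStar + c • ι ∈ F) :
    ∀ d : ℝ,
      (∀ η > 0, orderedModulus K L F G η ≤ orderedModulus K L F G δ₀ + d * (η - δ₀)) →
      d = δ₀ / (inner ℝ (K ι) (K (gStar - fStar)) : ℝ) := by
  intro d hd
  obtain ⟨η, hη, htr⟩ := htrans
  set u := K (gStar - fStar)
  set v := K ι
  have hφ := hasDerivAt_norm_add_smul (norm_pos_iff.mp (hnorm ▸ hδ₀)) v
  rw [hnorm, real_inner_comm] at hφ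
  have hφ₀ : ‖u + (0 : ℝ) • v‖ = δ₀ := by rw [zero_smul, add_zero, hnorm]
  have hsmall : ∀ᶠ t in 𝓝 (0 : ℝ), t ≤ d * (‖u + t • v‖ - ‖u + (0 : ℝ) • v‖) := by
    have hpos : ∀ᶠ t in 𝓝 (0 : ℝ), 0 < ‖u + t • v‖ :=
      continuousAt_const.eventually_lt hφ.continuousAt (hφ₀ ▸ hδ₀)
    filter_upwards [hpos, Metric.closedBall_mem_nhds (0 : ℝ) hη] with t ht htη
    have hF : fStar - t • ι ∈ F := by
      simpa [sub_eq_add_neg, ← neg_smul] using htr (-t) (by simpa using htη)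
    have hmove := add_le_orderedModulus_norm_add_smul (hbdd _ ht) hF hgG hι
    rw [hφ₀]
    linarith [hd _ ht]
  have hslope := mul_eq_one_of_hasDerivAt_of_eventually_le hφ hsmall
  have ha : inner ℝ v u ≠ 0 := by
    intro h
    rw [h, zero_div, mul_zero] at hslope
    exact zero_ne_one hslope
  field_simp at hslope ⊢
  linarith

/-- Under translation invariance at f*, the ordered modulus is differentiable at δ₀
with derivative δ₀ / ⟨Kι, K(g*−f*)⟩: every supergradient equals this value. -/
theorem translation_invariant_derivative {V Y : Type*} [AddCommGroup V] [Module ℝ V]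
    [NormedAddCommGroup Y] [InnerProductSpace ℝ Y]
    (K : V →ₗ[ℝ] Y) (L : V →ₗ[ℝ] ℝ) (F G : Set V)
    (hF : Convex ℝ F) (hG : Convex ℝ G) (hFG : (F ∩ G).Nonempty)
    (hbdd : ∀ δ > 0, BddAbove (orderedModulusSet K L F G δ))
    (δ₀ : ℝ) (hδ₀ : 0 < δ₀) (fStar gStar : V)
    (hfF : fStar ∈ F) (hgG : gStar ∈ G)
    (hnorm : ‖K (gStar - fStar)‖ = δ₀)
    (hattain : L gStar - L fStar = orderedModulus K L F G δ₀)
    (ι : V) (hι : L ι = 1)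
    (htrans : ∃ η > 0, ∀ c : ℝ, |c| ≤ η → fStar + c • ι ∈ F) :
    ∀ d : ℝ,
      (∀ η > 0, orderedModulus K L F G η ≤ orderedModulus K L F G δ₀ + d * (η - δ₀)) →
      d = δ₀ / (inner ℝ (K ι) (K (gStar - fStar)) : ℝ) :=
  translation_invariant_derivative_general K L F G hbdd δ₀ hδ₀ fStar gStar hgG hnorm hattain ι hι
    htrans
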